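/- arXiv:2310.06172 — 4 statements merged into one kernel-verified Lean document; each statement's English description precedes it below -/
import Mathlib

section
/- Gale duality, Farkas form (the linear-programming content of Theorem 2.4 of Braden–Licata–Proudfoot–Webster used to define stability of sign vectors): Let V be a linear subspace of ℝⁿ, let t ∈ ℝⁿ, and let α : Fin n → Bool be a sign vector with associated closed orthant O_α. Then the chamber (t + V) ∩ O_α is nonempty if and only if ⟨t, y⟩ ≥ 0 for every y ∈ V^⊥ ∩ O_α, where V^⊥ is the orthogonal complement of V. -/
/-!
The chamber is nonempty iff `t` lies in the cone `K = O_α + V`. Since the orthant is self-dual,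
the inner dual of `K` is `Vᗮ ∩ O_α`, so the theorem is the double-dual identity `K = K**`, valid
for closed cones. `K` is finitely generated, and finitely generated cones are closed by
Carathéodory's theorem: every point lies in the cone over a linearly independent subset of the
generators, and such a cone is the image of a closed orthant under a closed embedding.
-/

open scoped RealInnerProductSpace
open Finset

/-- The closed orthant associated to a sign vector `α : Fin n → Bool`. -/
def orthant {n : ℕ} (α : Fin n → Bool) : Set (EuclideanSpace ℝ (Fin n)) :=
  {x | ∀ i, (α i = true → 0 ≤ x i) ∧ (α i = false → x i ≤ 0)}

/-- The chamber `(t + V) ∩ O_α` of the coordinate hyperplane arrangement restricted to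
the affine subspace `t + V`. -/
def chamber {n : ℕ} (V : Submodule ℝ (EuclideanSpace ℝ (Fin n)))
    (t : EuclideanSpace ℝ (Fin n)) (α : Fin n → Bool) : Set (EuclideanSpace ℝ (Fin n)) :=
  ((fun v => t + v) '' (V : Set (EuclideanSpace ℝ (Fin n)))) ∩ orthant α

namespace PointedCone

section Caratheodory

variable {E : Type*} [AddCommGroup E] [Module ℝ E] {s : Finset E} {x : E}

lemma mem_hull_finset_iff :
    x ∈ hull ℝ (s : Set E) ↔ ∃ c : E → ℝ, (∀ v ∈ s, 0 ≤ c v) ∧ ∑ v ∈ s, c v • v = x := by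
  constructor
  · intro hx
    obtain ⟨f, -, rfl⟩ := Submodule.mem_span_finset.1 hx
    exact ⟨fun v => f v, fun v _ => (f v).2, rfl⟩
  · rintro ⟨c, hc, rfl⟩
    exact Submodule.sum_mem _ fun v hv => (hull ℝ _).smul_mem (hc v hv) (subset_hull hv)

/-- Carathéodory's exchange step: move `c` along the relation `d` until a coefficient vanishes. -/
lemma exists_sum_mem_hull_erase [DecidableEq E] {c d : E → ℝ} (hc : ∀ v ∈ s, 0 ≤ c v)
    (hd : ∑ v ∈ s, d v • v = 0) (hpos : ∃ u ∈ s, 0 < d u) :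
    ∃ w ∈ s, ∑ v ∈ s, c v • v ∈ hull ℝ (s.erase w : Set E) := by
  obtain ⟨w, hw, hmin⟩ := (s.filter (0 < d ·)).exists_min_image (fun v => c v / d v)
    (by simpa [Finset.Nonempty] using hpos)
  rw [mem_filter] at hw
  set r := c w / d w
  have hr : 0 ≤ r := div_nonneg (hc w hw.1) hw.2.le
  refine ⟨w, hw.1, mem_hull_finset_iff.2 ⟨fun v => c v - r * d v, fun v hv => ?_, ?_⟩⟩
  · have hvs := mem_of_mem_erase hv
    rw [sub_nonneg]
    rcases lt_or_ge 0 (d v) with hdv | hdv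
    · exact (le_div_iff₀ hdv).1 (hmin v (mem_filter.2 ⟨hvs, hdv⟩))
    · exact (mul_nonpos_of_nonneg_of_nonpos hr hdv).trans (hc v hvs)
  · have hw0 : c w - r * d w = 0 := by simp [r, div_mul_cancel₀ _ hw.2.ne']
    rw [sum_erase _ (by beta_reduce; rw [hw0, zero_smul])]
    simp only [sub_smul, mul_smul, sum_sub_distrib, ← smul_sum, hd, smul_zero, sub_zero]

theorem exists_linearIndepOn_subset_of_mem_hull (hx : x ∈ hull ℝ (s : Set E)) :
    ∃ t ⊆ s, LinearIndepOn ℝ id (t : Set E) ∧ x ∈ hull ℝ (t : Set E) := by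
  classical
  induction s using Finset.strongInduction generalizing x with
  | H s ih =>
    by_cases hs : LinearIndepOn ℝ id (s : Set E)
    · exact ⟨s, subset_rfl, hs, hx⟩
    obtain ⟨f, hf, u, hu, hfu⟩ := not_linearIndepOn_finset_iff.1 hs
    obtain ⟨d, hd, hpos⟩ : ∃ d : E → ℝ, ∑ v ∈ s, d v • v = 0 ∧ ∃ u ∈ s, 0 < d u := by
      rcases hfu.lt_or_gt with hneg | hpos
      · exact ⟨-f, by simpa [neg_smul, sum_neg_distrib] using hf, u, hu, by simpa using hneg⟩
      · exact ⟨f, hf, u, hu, hpos⟩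
    obtain ⟨c, hc, rfl⟩ := mem_hull_finset_iff.1 hx
    obtain ⟨w, hw, hmem⟩ := exists_sum_mem_hull_erase hc hd hpos
    obtain ⟨t, hts, ht, hxt⟩ := ih _ (erase_ssubset hw) hmem
    exact ⟨t, hts.trans (erase_subset w s), ht, hxt⟩

end Caratheodory

section Closed

variable {E : Type*} [AddCommGroup E] [Module ℝ E] [TopologicalSpace E] [IsTopologicalAddGroup E]
  [ContinuousSMul ℝ E] [T2Space E]

lemma isClosed_hull_of_linearIndepOn {t : Finset E} (ht : LinearIndepOn ℝ id (t : Set E)) :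
    IsClosed (hull ℝ (t : Set E) : Set E) := by
  let φ := Fintype.linearCombination ℝ (fun v : (t : Set E) => (v : E))
  have hφ : Topology.IsClosedEmbedding φ :=
    LinearMap.isClosedEmbedding_of_injective (LinearMap.ker_eq_bot.2
      (LinearIndependent.fintypeLinearCombination_injective ht))
  have himage : (hull ℝ (t : Set E) : Set E) = φ '' Set.Ici 0 := by
    ext x
    rw [SetLike.mem_coe, Submodule.mem_span_iff_of_fintype]
    constructor
    · rintro ⟨f, rfl⟩
      exact ⟨fun v => f v, fun v => (f v).2, by simp [φ, Fintype.linearCombination_apply]⟩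
    · rintro ⟨c, hc, rfl⟩
      exact ⟨fun v => ⟨c v, hc v⟩, by simp [φ, Fintype.linearCombination_apply]⟩
  rw [himage]
  exact hφ.isClosedMap _ isClosed_Ici

theorem isClosed_of_fg {C : PointedCone ℝ E} (hC : C.FG) : IsClosed (C : Set E) := by
  classical
  obtain ⟨s, rfl⟩ := hC
  have hunion : (hull ℝ (s : Set E) : Set E) =
      ⋃ t ∈ s.powerset.filter (fun t : Finset E => LinearIndepOn ℝ id (t : Set E)),
        (hull ℝ (t : Set E) : Set E) := by
    ext x
    simp only [SetLike.mem_coe, Set.mem_iUnion, mem_filter, mem_powerset, exists_prop]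
    constructor
    · intro hx
      obtain ⟨t, hts, ht, hxt⟩ := exists_linearIndepOn_subset_of_mem_hull hx
      exact ⟨t, ⟨hts, ht⟩, hxt⟩
    · rintro ⟨t, ⟨hts, -⟩, hxt⟩
      exact Submodule.span_mono (by exact_mod_cast hts) hxt
  rw [hunion]
  exact isClosed_biUnion_finset fun t ht => isClosed_hull_of_linearIndepOn (mem_filter.1 ht).2

end Closed

end PointedCone

section Orthant

variable {n : ℕ} (α : Fin n → Bool)

def orthantSign (i : Fin n) : ℝ := if α i then 1 else -1

lemma orthantSign_mul_self (i : Fin n) : orthantSign α i * orthantSign α i = 1 := by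
  unfold orthantSign; split_ifs <;> norm_num

variable {α}

lemma mem_orthant_iff {x : EuclideanSpace ℝ (Fin n)} :
    x ∈ orthant α ↔ ∀ i, 0 ≤ orthantSign α i * x i := by
  refine forall_congr' fun i => ?_
  unfold orthantSign
  cases α i <;> simp

lemma inner_nonneg_of_mem_orthant {x y : EuclideanSpace ℝ (Fin n)} (hx : x ∈ orthant α)
    (hy : y ∈ orthant α) : 0 ≤ ⟪x, y⟫ := by
  rw [mem_orthant_iff] at hx hy
  rw [PiLp.inner_apply]
  refine sum_nonneg fun i _ => ?_
  calc (0 : ℝ) ≤ (orthantSign α i * x i) * (orthantSign α i * y i) := mul_nonneg (hx i) (hy i)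
    _ = ⟪x i, y i⟫ := by
      simp only [RCLike.inner_apply, conj_trivial]
      linear_combination (x i * y i) * orthantSign_mul_self α i

variable (α)

lemma single_orthantSign_mem_orthant (i : Fin n) :
    EuclideanSpace.single i (orthantSign α i) ∈ orthant α := by
  refine mem_orthant_iff.2 fun j => ?_
  simp only [PiLp.single_apply, mul_ite, mul_zero]
  split_ifs with hji
  · rw [hji, orthantSign_mul_self]; exact zero_le_one
  · exact le_rfl

def orthantCone : PointedCone ℝ (EuclideanSpace ℝ (Fin n)) where
  carrier := orthant α
  add_mem' {x y} hx hy := mem_orthant_iff.2 fun i => by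
    simpa [mul_add] using add_nonneg (mem_orthant_iff.1 hx i) (mem_orthant_iff.1 hy i)
  zero_mem' := mem_orthant_iff.2 fun i => by simp
  smul_mem' c x hx := mem_orthant_iff.2 fun i => by
    have : 0 ≤ (c : ℝ) * (orthantSign α i * x i) := mul_nonneg c.2 (mem_orthant_iff.1 hx i)
    simp only [← Nonneg.coe_smul, PiLp.smul_apply, smul_eq_mul]
    linarith [mul_left_comm (c : ℝ) (orthantSign α i) (x i)]

lemma orthantCone_eq_hull : orthantCone α =
    PointedCone.hull ℝ (Set.range fun i => EuclideanSpace.single i (orthantSign α i)) := by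
  apply le_antisymm
  · intro x hx
    have hsum : ∑ i, (orthantSign α i * x i) • EuclideanSpace.single i (orthantSign α i) = x := by
      ext k
      simp only [WithLp.ofLp_sum, WithLp.ofLp_smul, PiLp.ofLp_single, Finset.sum_apply,
        Pi.smul_apply, Pi.single_apply, smul_eq_mul, mul_ite, mul_zero, sum_ite_eq, mem_univ,
        if_true]
      linear_combination x k * orthantSign_mul_self α k
    rw [← hsum]
    exact Submodule.sum_mem _ fun i _ => PointedCone.smul_mem _ (mem_orthant_iff.1 hx i)
      (PointedCone.subset_hull (Set.mem_range_self i))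
  · rw [Submodule.span_le]
    rintro _ ⟨i, rfl⟩
    exact single_orthantSign_mem_orthant α i

variable (V : Submodule ℝ (EuclideanSpace ℝ (Fin n)))

def orthantSupCone : ProperCone ℝ (EuclideanSpace ℝ (Fin n)) where
  toSubmodule := orthantCone α ⊔ V
  isClosed' := by
    have hO : (orthantCone α).FG := orthantCone_eq_hull α ▸ Submodule.fg_span (Set.finite_range _)
    exact PointedCone.isClosed_of_fg (hO.sup (IsNoetherian.noetherian V).restrictScalars)

variable {α}

lemma mem_orthantSupCone {x : EuclideanSpace ℝ (Fin n)} :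
    x ∈ orthantSupCone α V ↔ ∃ a ∈ orthant α, ∃ v ∈ V, a + v = x :=
  Submodule.mem_sup

lemma chamber_nonempty_iff_mem_orthantSupCone {t : EuclideanSpace ℝ (Fin n)} :
    (chamber V t α).Nonempty ↔ t ∈ orthantSupCone α V := by
  rw [mem_orthantSupCone]
  constructor
  · rintro ⟨_, ⟨v, hv, rfl⟩, hx⟩
    exact ⟨t + v, hx, -v, V.neg_mem hv, add_neg_cancel_right t v⟩
  · rintro ⟨a, ha, v, hv, rfl⟩
    exact ⟨a, ⟨-v, V.neg_mem hv, add_neg_cancel_right a v⟩, ha⟩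

lemma coe_innerDual_orthantSupCone :
    (ProperCone.innerDual (orthantSupCone α V : Set (EuclideanSpace ℝ (Fin n))) :
      Set (EuclideanSpace ℝ (Fin n))) = (Vᗮ : Set _) ∩ orthant α := by
  ext y
  simp only [SetLike.mem_coe, ProperCone.mem_innerDual, Set.mem_inter_iff]
  constructor
  · intro hy
    refine ⟨(Submodule.mem_orthogonal V y).2 fun v hv => ?_, mem_orthant_iff.2 fun i => ?_⟩
    · have h₁ := hy ((mem_orthantSupCone V).2 ⟨0, (orthantCone α).zero_mem, v, hv, zero_add v⟩)
      have h₂ := hy ((mem_orthantSupCone V).2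
        ⟨0, (orthantCone α).zero_mem, -v, V.neg_mem hv, zero_add (-v)⟩)
      rw [inner_neg_left] at h₂
      linarith
    · simpa [EuclideanSpace.inner_single_left] using hy ((mem_orthantSupCone V).2
        ⟨_, single_orthantSign_mem_orthant α i, 0, V.zero_mem, add_zero _⟩)
  · rintro ⟨hyV, hyO⟩ x hx
    obtain ⟨a, ha, v, hv, rfl⟩ := (mem_orthantSupCone V).1 hx
    rw [inner_add_left, (Submodule.mem_orthogonal V y).1 hyV v hv, add_zero]
    exact inner_nonneg_of_mem_orthant ha hyO

end Orthant

/-- Gale duality, Farkas form: the chamber `(t + V) ∩ O_α` is nonempty iff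
`⟨t, y⟩ ≥ 0` for every `y ∈ V^⊥ ∩ O_α`. -/
theorem gale_duality_farkas {n : ℕ} (V : Submodule ℝ (EuclideanSpace ℝ (Fin n)))
    (t : EuclideanSpace ℝ (Fin n)) (α : Fin n → Bool) :
    (chamber V t α).Nonempty ↔
      ∀ y ∈ (Vᗮ : Set (EuclideanSpace ℝ (Fin n))) ∩ orthant α, 0 ≤ ⟪t, y⟫ := by
  rw [chamber_nonempty_iff_mem_orthantSupCone,
    ← ProperCone.innerDual_innerDual (orthantSupCone α V), ProperCone.mem_innerDual,
    coe_innerDual_orthantSupCone]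
  simp only [real_inner_comm t]
end

section
/- Boundedness of the polarization on a chamber is detected on the recession cone, and in particular is independent of the translation parameter: Let V be a linear subspace of ℝⁿ, let t, m ∈ ℝⁿ, and let α : Fin n → Bool be a sign vector with associated closed orthant O_α. If the chamber (t + V) ∩ O_α is nonempty, then the function x ↦ ⟨m, x⟩ is bounded above on (t + V) ∩ O_α if and only if ⟨m, y⟩ ≤ 0 for every y ∈ V ∩ O_α. Consequently, for two parameters t, t′ ∈ ℝⁿ such that both chambers (t + V) ∩ O_α and (t′ + V) ∩ O_α are nonempty, ⟨m, ·⟩ is bounded above on the first if and only if it is bounded above on the second. -/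
open scoped RealInnerProductSpace

/-!
Write the chamber as a polyhedron `P = (t + V) ∩ {x | ∀ i, 0 ≤ fᵢ x}` with `fᵢ = ±xᵢ`.
If `ℓ = ⟪m, ·⟫` is bounded above on `P`, it is `≤ 0` on every ray `x + ℝ≥0 y ⊆ P`, i.e. on the
recession cone. Conversely, if `ℓ` is unbounded, pick `xₖ ∈ P` with `ℓ xₖ → ∞`; a limit point `y`
of the directions of `xₖ - t` lies in the recession cone, is nonzero and has `ℓ y ≥ 0`.
If `ℓ y > 0` we are done. If `ℓ y = 0`, then `fᵢ y > 0` for some `i` since the `fᵢ` separate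
points, and sliding each point of `P` back along `y` until it hits a facet `fᵢ = 0` with
`fᵢ y > 0` does not change `ℓ`. Hence `ℓ` is unbounded on one of these finitely many facets,
which is a polyhedron in the smaller subspace `V ∩ ker fᵢ`, and we conclude by induction on `V`.
-/

open Filter Topology

section Polyhedron

variable {E : Type*} [NormedAddCommGroup E] [NormedSpace ℝ E] {ι : Type*}

def polyhedralCone (f : ι → E →L[ℝ] ℝ) : Set E := {x | ∀ i, 0 ≤ f i x}

def polyhedron (V : Submodule ℝ E) (t : E) (f : ι → E →L[ℝ] ℝ) : Set E :=
  {x | x - t ∈ V ∧ x ∈ polyhedralCone f}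

variable {V : Submodule ℝ E} {t : E} {f : ι → E →L[ℝ] ℝ}

theorem exists_asymptotic_direction [FiniteDimensional ℝ E] {x : ℕ → E}
    (hx : Tendsto (fun k => ‖x k‖) atTop atTop) (hxV : ∀ k, x k ∈ V) :
    ∃ y ∈ V, y ≠ 0 ∧ ∀ g : E →L[ℝ] ℝ, BddBelow (Set.range (g ∘ x)) → 0 ≤ g y := by
  set u : ℕ → E := fun k => ‖x k‖⁻¹ • x k
  have hu : ∀ k, u k ∈ Metric.closedBall (0 : E) 1 := fun k => by
    simpa [u, norm_smul] using inv_mul_le_one_of_le₀ le_rfl (norm_nonneg (x k))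
  obtain ⟨y, -, φ, hφ, hlim⟩ := (isCompact_closedBall (0 : E) 1).tendsto_subseq hu
  have hxφ : Tendsto (fun k => ‖x (φ k)‖) atTop atTop := hx.comp hφ.tendsto_atTop
  refine ⟨y, ?_, ?_, fun g ⟨c, hc⟩ => ?_⟩
  · exact V.closed_of_finiteDimensional.mem_of_tendsto hlim
      (Eventually.of_forall fun k => V.smul_mem _ (hxV (φ k)))
  · have hunit : (fun k => ‖u (φ k)‖) =ᶠ[atTop] fun _ => 1 :=
      (hxφ.eventually_gt_atTop 0).mono fun k hk => by simp [u, norm_smul, hk.ne']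
    have hy : ‖y‖ = 1 := tendsto_nhds_unique hlim.norm (tendsto_const_nhds.congr' hunit.symm)
    exact norm_ne_zero_iff.mp (by rw [hy]; exact one_ne_zero)
  · have hlower : ∀ k, ‖x (φ k)‖⁻¹ * c ≤ g (u (φ k)) := fun k => by
      simp only [u, map_smul, smul_eq_mul]
      exact mul_le_mul_of_nonneg_left (hc ⟨φ k, rfl⟩) (inv_nonneg.mpr (norm_nonneg _))
    have hzero : Tendsto (fun k => ‖x (φ k)‖⁻¹ * c) atTop (𝓝 0) := by
      simpa using hxφ.inv_tendsto_atTop.mul_const c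
    exact le_of_tendsto_of_tendsto hzero ((g.continuous.tendsto y).comp hlim)
      (Eventually.of_forall hlower)

theorem add_smul_mem_polyhedron {x y : E} (hx : x ∈ polyhedron V t f) (hyV : y ∈ V)
    (hyC : y ∈ polyhedralCone f) {s : ℝ} (hs : 0 ≤ s) : x + s • y ∈ polyhedron V t f := by
  refine ⟨?_, fun i => ?_⟩
  · rw [add_sub_right_comm]
    exact V.add_mem hx.1 (V.smul_mem s hyV)
  · rw [map_add, map_smul, smul_eq_mul]
    exact add_nonneg (hx.2 i) (mul_nonneg hs (hyC i))

theorem nonpos_of_bddAbove_image_of_add_smul_mem {P : Set E} (hP : P.Nonempty) {y : E}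
    (hy : ∀ x ∈ P, ∀ s : ℝ, 0 ≤ s → x + s • y ∈ P) (ℓ : E →L[ℝ] ℝ)
    (hb : BddAbove (ℓ '' P)) : ℓ y ≤ 0 := by
  obtain ⟨x, hx⟩ := hP
  obtain ⟨b, hb⟩ := hb
  by_contra! hℓy
  have hℓx := hb (Set.mem_image_of_mem ℓ hx)
  have hs : 0 ≤ (b - ℓ x + 1) / ℓ y := div_nonneg (by linarith) hℓy.le
  have hmem := hb (Set.mem_image_of_mem ℓ (hy x hx _ hs))
  rw [map_add, map_smul, smul_eq_mul, div_mul_cancel₀ _ hℓy.ne'] at hmem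
  linarith

theorem exists_nonneg_recession_direction [FiniteDimensional ℝ E] {ℓ : E →L[ℝ] ℝ}
    (h : ¬BddAbove (ℓ '' polyhedron V t f)) :
    ∃ y ∈ V, y ≠ 0 ∧ y ∈ polyhedralCone f ∧ 0 ≤ ℓ y := by
  have hex : ∀ k : ℕ, ∃ x ∈ polyhedron V t f, ℓ t + k ≤ ℓ x := fun k => by
    obtain ⟨_, ⟨x, hx, rfl⟩, hlt⟩ := not_bddAbove_iff.mp h (ℓ t + k)
    exact ⟨x, hx, hlt.le⟩
  choose x hx hℓx using hex
  have hℓz : ∀ k : ℕ, (k : ℝ) ≤ ℓ (x k - t) := fun k => by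
    rw [map_sub]
    linarith [hℓx k]
  have hnorm : Tendsto (fun k => ‖x k - t‖) atTop atTop := by
    refine Tendsto.atTop_of_const_mul₀ (c := ‖ℓ‖ + 1) (by positivity) ?_
    refine tendsto_atTop_mono (fun k => ?_) tendsto_natCast_atTop_atTop
    calc (k : ℝ) ≤ ℓ (x k - t) := hℓz k
      _ ≤ ‖ℓ‖ * ‖x k - t‖ := le_of_abs_le (ℓ.le_opNorm _)
      _ ≤ (‖ℓ‖ + 1) * ‖x k - t‖ := by nlinarith [norm_nonneg (x k - t)]
  obtain ⟨y, hyV, hy0, hy⟩ := exists_asymptotic_direction hnorm fun k => (hx k).1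
  refine ⟨y, hyV, hy0, fun i => hy (f i) ⟨-f i t, ?_⟩, hy ℓ ⟨0, ?_⟩⟩
  · rintro _ ⟨k, rfl⟩
    simpa using (hx k).2 i
  · rintro _ ⟨k, rfl⟩
    exact (Nat.cast_nonneg k).trans (hℓz k)

theorem exists_sub_smul_mem_polyhedron_apply_eq_zero [Finite ι] {x y : E}
    (hx : x ∈ polyhedron V t f) (hyV : y ∈ V) (hyC : y ∈ polyhedralCone f) (hpos : ∃ i, 0 < f i y) :
    ∃ i, 0 < f i y ∧ ∃ s : ℝ, x - s • y ∈ polyhedron V t f ∧ f i (x - s • y) = 0 := by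
  obtain ⟨i, hi, hmin⟩ := Set.exists_min_image {i | 0 < f i y} (fun i => f i x / f i y)
    (Set.toFinite _) hpos
  have hsub : ∀ j, f j (x - (f i x / f i y) • y) = f j x - f i x / f i y * f j y := fun j => by
    rw [map_sub, map_smul, smul_eq_mul]
  refine ⟨i, hi, f i x / f i y, ⟨?_, fun j => ?_⟩, ?_⟩
  · rw [sub_right_comm]
    exact V.sub_mem hx.1 (V.smul_mem _ hyV)
  · rw [hsub]
    rcases (hyC j).lt_or_eq with hj | hj
    · have := hmin j hj
      rw [le_div_iff₀ hj] at this
      linarith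
    · rw [← hj, mul_zero, sub_zero]
      exact hx.2 j
  · rw [hsub, div_mul_cancel₀ _ (hi : 0 < f i y).ne', sub_self]

theorem exists_not_bddAbove_facet [Finite ι] {ℓ : E →L[ℝ] ℝ}
    (h : ¬BddAbove (ℓ '' polyhedron V t f)) {y : E} (hyV : y ∈ V)
    (hyC : y ∈ polyhedralCone f) (hℓy : ℓ y = 0) (hpos : ∃ i, 0 < f i y) :
    ∃ i, 0 < f i y ∧ ¬BddAbove (ℓ '' {x ∈ polyhedron V t f | f i x = 0}) := by
  by_contra! hbdd
  refine h (((Set.toFinite {i | 0 < f i y}).bddAbove_biUnion.mpr hbdd).mono ?_)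
  rintro _ ⟨x, hx, rfl⟩
  obtain ⟨i, hi, s, hxs, hzero⟩ := exists_sub_smul_mem_polyhedron_apply_eq_zero hx hyV hyC hpos
  refine Set.mem_biUnion hi ⟨x - s • y, ⟨hxs, hzero⟩, ?_⟩
  rw [map_sub, map_smul, hℓy, smul_zero, sub_zero]

theorem facet_subset_polyhedron {i : ι} {p : E}
    (hp : p ∈ {x ∈ polyhedron V t f | f i x = 0}) :
    {x ∈ polyhedron V t f | f i x = 0} ⊆
      polyhedron (V ⊓ LinearMap.ker (f i : E →ₗ[ℝ] ℝ)) p f := by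
  rintro x ⟨hx, hxi⟩
  refine ⟨⟨?_, ?_⟩, hx.2⟩
  · simpa using V.sub_mem hx.1 hp.1.1
  · simp [LinearMap.mem_ker, hxi, hp.2]

theorem exists_pos_of_not_bddAbove [FiniteDimensional ℝ E] [Finite ι]
    (hf : ∀ y, (∀ i, f i y = 0) → y = 0) {ℓ : E →L[ℝ] ℝ}
    (h : ¬BddAbove (ℓ '' polyhedron V t f)) : ∃ y ∈ V, y ∈ polyhedralCone f ∧ 0 < ℓ y := by
  induction V using WellFoundedLT.induction generalizing t with | _ V ih => ?_
  obtain ⟨y, hyV, hy0, hyC, hℓy⟩ := exists_nonneg_recession_direction h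
  rcases hℓy.lt_or_eq with hℓy | hℓy
  · exact ⟨y, hyV, hyC, hℓy⟩
  have hpos : ∃ i, 0 < f i y := by
    by_contra! hneg
    exact hy0 (hf y fun i => le_antisymm (hneg i) (hyC i))
  obtain ⟨i, hi, hfacet⟩ := exists_not_bddAbove_facet h hyV hyC hℓy.symm hpos
  obtain ⟨p, hp⟩ : Set.Nonempty {x ∈ polyhedron V t f | f i x = 0} := by
    by_contra! hempty
    exact hfacet (by simp [hempty])
  have hlt : V ⊓ LinearMap.ker (f i : E →ₗ[ℝ] ℝ) < V :=
    inf_lt_left.mpr fun hle => hi.ne' (hle hyV)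
  obtain ⟨z, hz, hzC, hℓz⟩ := ih _ hlt fun hb => hfacet (hb.mono
    (Set.image_mono (facet_subset_polyhedron hp)))
  exact ⟨z, hz.1, hzC, hℓz⟩

theorem bddAbove_image_polyhedron_iff [FiniteDimensional ℝ E] [Finite ι]
    (hf : ∀ y, (∀ i, f i y = 0) → y = 0) (hne : (polyhedron V t f).Nonempty) (ℓ : E →L[ℝ] ℝ) :
    BddAbove (ℓ '' polyhedron V t f) ↔ ∀ y ∈ V, y ∈ polyhedralCone f → ℓ y ≤ 0 := by
  refine ⟨fun hb y hyV hyC => ?_, fun h => ?_⟩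
  · exact nonpos_of_bddAbove_image_of_add_smul_mem hne
      (fun x hx s hs => add_smul_mem_polyhedron hx hyV hyC hs) ℓ hb
  · by_contra hb
    obtain ⟨y, hyV, hyC, hℓy⟩ := exists_pos_of_not_bddAbove hf hb
    exact (h y hyV hyC).not_gt hℓy

end Polyhedron

section Orthant

variable {n : ℕ}

noncomputable def signedCoord (α : Fin n → Bool) (i : Fin n) :
    EuclideanSpace ℝ (Fin n) →L[ℝ] ℝ :=
  if α i then EuclideanSpace.proj i else -EuclideanSpace.proj i

theorem orthant_eq_polyhedralCone (α : Fin n → Bool) :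
    orthant α = polyhedralCone (signedCoord α) := by
  ext x
  refine forall_congr' fun i => ?_
  cases h : α i <;> simp [signedCoord, h]

theorem chamber_eq_polyhedron (V : Submodule ℝ (EuclideanSpace ℝ (Fin n)))
    (t : EuclideanSpace ℝ (Fin n)) (α : Fin n → Bool) :
    chamber V t α = polyhedron V t (signedCoord α) := by
  ext x
  simp [chamber, polyhedron, orthant_eq_polyhedralCone, Set.image_add_left, neg_add_eq_sub]

theorem eq_zero_of_forall_signedCoord_eq_zero {α : Fin n → Bool} {y : EuclideanSpace ℝ (Fin n)}
    (hy : ∀ i, signedCoord α i y = 0) : y = 0 := by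
  ext i
  cases h : α i <;> simpa [signedCoord, h] using hy i

end Orthant

/-- Boundedness of the polarization on a chamber is detected on the recession cone
`V ∩ O_α`, and in particular is independent of the translation parameter. -/
theorem bounded_iff_recession_cone {n : ℕ}
    (V : Submodule ℝ (EuclideanSpace ℝ (Fin n)))
    (m : EuclideanSpace ℝ (Fin n)) (α : Fin n → Bool) :
    (∀ t : EuclideanSpace ℝ (Fin n), (chamber V t α).Nonempty →
      (BddAbove ((fun x => ⟪m, x⟫) '' chamber V t α) ↔
        ∀ y ∈ (V : Set (EuclideanSpace ℝ (Fin n))) ∩ orthant α, ⟪m, y⟫ ≤ 0)) ∧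
    (∀ t t' : EuclideanSpace ℝ (Fin n),
      (chamber V t α).Nonempty → (chamber V t' α).Nonempty →
      (BddAbove ((fun x => ⟪m, x⟫) '' chamber V t α) ↔
        BddAbove ((fun x => ⟪m, x⟫) '' chamber V t' α))) := by
  have key : ∀ t : EuclideanSpace ℝ (Fin n), (chamber V t α).Nonempty →
      (BddAbove ((fun x => ⟪m, x⟫) '' chamber V t α) ↔
        ∀ y ∈ (V : Set (EuclideanSpace ℝ (Fin n))) ∩ orthant α, ⟪m, y⟫ ≤ 0) := by
    intro t hne
    rw [chamber_eq_polyhedron] at hne ⊢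
    rw [orthant_eq_polyhedralCone]
    simpa using bddAbove_image_polyhedron_iff (fun _ => eq_zero_of_forall_signedCoord_eq_zero)
      hne (innerSL ℝ m)
  exact ⟨key, fun t t' ht ht' => (key t ht).trans (key t' ht').symm⟩
end

section
/- Two-parameter Gale duality relating a polarized arrangement to its Gale dual: Let V be a linear subspace of ℝⁿ and let t, m ∈ ℝⁿ. Let α : Fin n → Bool be a sign vector with associated closed orthant O_α, and suppose the Gale dual chamber (m + V^⊥) ∩ O_α is nonempty. Then the primal chamber (t + V) ∩ O_α is nonempty if and only if the functional y ↦ ⟨t, y⟩ is bounded below on (m + V^⊥) ∩ O_α. Equivalently: the sign vector α is t-unstable for the arrangement on t + V if and only if the functional ⟨−t, ·⟩ is unbounded above on the chamber of the Gale dual arrangement on m + V^⊥ associated to α. -/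
open scoped RealInnerProductSpace

/-!
If `x ∈ (t + V) ∩ O_α`, then for `y` in the dual chamber
`⟪t, y⟫ = ⟪x, y⟫ - ⟪x - t, m⟫ ≥ -⟪x - t, m⟫`, because the orthant is self-dual and `x - t ⊥ y - m`.
Conversely, if `(t + V) ∩ O_α` is empty, the projection of `t` to `Vᗮ` lies outside the projection
of `O_α`. That image is a finitely generated cone, hence closed, so Farkas' lemma gives
`w ∈ Vᗮ ∩ O_α` with `⟪t, w⟫ < 0`; along the ray `y + s • w` in the dual chamber, `⟪t, ·⟫` tends
to `-∞`.

Finitely generated cones are closed by induction on the support: where the generating map is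
injective it is a closed embedding, and otherwise a kernel vector lets one generator be dropped.
-/

section ConicHull

variable {ι : Type*}

def nonnegSupported (T : Finset ι) : Set (ι → ℝ) := {c | 0 ≤ c ∧ ∀ i ∉ T, c i = 0}

lemma nonnegSupported_mono {T T' : Finset ι} (h : T ⊆ T') :
    nonnegSupported T ⊆ nonnegSupported T' :=
  fun _ hc => ⟨hc.1, fun i hi => hc.2 i fun hiT => hi (h hiT)⟩

lemma isClosed_nonnegSupported (T : Finset ι) : IsClosed (nonnegSupported T) := by
  simp only [nonnegSupported, Set.ofPred_and, Set.ofPred_forall]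
  exact isClosed_Ici.inter <| isClosed_iInter fun i => isClosed_iInter fun _ =>
    isClosed_eq (continuous_apply i) continuous_const

/-- Conic Carathéodory step: subtract the largest multiple of `d` keeping `c` nonnegative. -/
lemma exists_sub_smul_mem_nonnegSupported_erase [Fintype ι] [DecidableEq ι] {T : Finset ι}
    {c d : ι → ℝ} (hc : c ∈ nonnegSupported T) (hdT : ∀ i ∉ T, d i = 0) (hd : ∃ i, 0 < d i) :
    ∃ j ∈ T, ∃ s : ℝ, c - s • d ∈ nonnegSupported (T.erase j) := by
  obtain ⟨j, hj, hmin⟩ := (Finset.univ.filter (0 < d ·)).exists_min_image (fun i => c i / d i)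
    (by simpa [Finset.filter_nonempty_iff] using hd)
  simp only [Finset.mem_filter, Finset.mem_univ, true_and] at hj hmin
  have hjT : j ∈ T := by_contra fun h => hj.ne' (hdT j h)
  have hs : 0 ≤ c j / d j := div_nonneg (hc.1 j) hj.le
  refine ⟨j, hjT, c j / d j, fun i => ?_, fun i hi => ?_⟩
  · rcases lt_or_ge 0 (d i) with hdi | hdi
    · simpa using sub_nonneg.mpr ((le_div_iff₀ hdi).mp (hmin i hdi))
    · simpa using add_nonneg (hc.1 i) (mul_nonneg hs (neg_nonneg.mpr hdi))
  · rcases eq_or_ne i j with rfl | hij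
    · simp [div_mul_cancel₀ _ hj.ne']
    · have hiT : i ∉ T := fun h => hi (Finset.mem_erase.mpr ⟨hij, h⟩)
      simp [hc.2 i hiT, hdT i hiT]

variable {E : Type*} [AddCommGroup E] [Module ℝ E] [TopologicalSpace E] [IsTopologicalAddGroup E]
  [ContinuousSMul ℝ E] [T2Space E]

lemma isClosed_image_nonnegSupported_of_injOn [Finite ι] (f : (ι → ℝ) →ₗ[ℝ] E) {T : Finset ι}
    (hf : ∀ d, (∀ i ∉ T, d i = 0) → f d = 0 → d = 0) : IsClosed (f '' nonnegSupported T) := by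
  let W : Submodule ℝ (ι → ℝ) := Submodule.pi (↑T)ᶜ fun _ => ⊥
  have hker : LinearMap.ker (f.domRestrict W) = ⊥ :=
    LinearMap.ker_eq_bot'.mpr fun d hd => Subtype.ext <|
      hf d (fun i hi => (Submodule.mem_bot ℝ).mp (Submodule.mem_pi.mp d.2 i hi)) hd
  have hW : nonnegSupported T ⊆ W := fun c hc => by simpa [W] using hc.2
  have himage :
      f '' nonnegSupported T = f.domRestrict W '' (Subtype.val ⁻¹' nonnegSupported T) := by
    calc f '' nonnegSupported T = f '' (Subtype.val '' (Subtype.val ⁻¹' nonnegSupported T)) := by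
          rw [Set.image_preimage_eq_of_subset (by simpa using hW)]
      _ = _ := Set.image_image _ _ _
  rw [himage]
  exact (LinearMap.isClosedEmbedding_of_injective hker).isClosedMap _
    ((isClosed_nonnegSupported T).preimage continuous_subtype_val)

theorem isClosed_image_nonnegSupported [Fintype ι] [DecidableEq ι] (f : (ι → ℝ) →ₗ[ℝ] E)
    (T : Finset ι) : IsClosed (f '' nonnegSupported T) := by
  induction T using Finset.strongInduction with
  | _ T ih =>
  by_cases hf : ∀ d, (∀ i ∉ T, d i = 0) → f d = 0 → d = 0
  · exact isClosed_image_nonnegSupported_of_injOn f hf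
  push Not at hf
  obtain ⟨d, hdT, hfd, hpos⟩ : ∃ d, (∀ i ∉ T, d i = 0) ∧ f d = 0 ∧ ∃ i, 0 < d i := by
    obtain ⟨d, hdT, hfd, hd⟩ := hf
    obtain ⟨i, hi⟩ := Function.ne_iff.mp hd
    rcases hi.lt_or_gt with hi | hi
    · exact ⟨-d, by simpa using hdT, by simp [hfd], i, by simpa using hi⟩
    · exact ⟨d, hdT, hfd, i, hi⟩
  have hunion : f '' nonnegSupported T = ⋃ j ∈ T, f '' nonnegSupported (T.erase j) := by
    refine subset_antisymm ?_ (Set.iUnion₂_subset fun j _ =>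
      Set.image_mono (nonnegSupported_mono (T.erase_subset j)))
    rintro _ ⟨c, hc, rfl⟩
    obtain ⟨j, hj, s, hcs⟩ := exists_sub_smul_mem_nonnegSupported_erase hc hdT hpos
    exact Set.mem_biUnion hj ⟨c - s • d, hcs, by simp [hfd]⟩
  rw [hunion]
  exact T.finite_toSet.isClosed_biUnion fun j hj => ih _ (T.erase_ssubset hj)

theorem LinearMap.isClosed_image_nonneg [Fintype ι] (f : (ι → ℝ) →ₗ[ℝ] E) :
    IsClosed (f '' {c | 0 ≤ c}) := by
  classical
  simpa [nonnegSupported] using isClosed_image_nonnegSupported f Finset.univ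

end ConicHull

section Orthant

variable {n : ℕ}

def signFlip (α : Fin n → Bool) : (Fin n → ℝ) →ₗ[ℝ] EuclideanSpace ℝ (Fin n) where
  toFun c := WithLp.toLp 2 fun i => if α i then c i else -c i
  map_add' c d := by ext i; by_cases h : α i <;> simp [h, add_comm]
  map_smul' r c := by ext i; by_cases h : α i <;> simp [h]

lemma orthant_eq_image_signFlip (α : Fin n → Bool) :
    orthant α = signFlip α '' {c | 0 ≤ c} := by
  ext x
  refine ⟨fun hx => ⟨fun i => if α i then x i else -x i, fun i => ?_, ?_⟩, ?_⟩
  · cases hα : α i <;> simp [hα, (hx i).1, (hx i).2]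
  · ext i; by_cases h : α i <;> simp [signFlip, h]
  · rintro ⟨c, hc, rfl⟩ i
    cases hα : α i <;> simpa [signFlip, hα] using hc i

lemma mem_orthant_iff_forall_inner_nonneg {α : Fin n → Bool} {y : EuclideanSpace ℝ (Fin n)} :
    y ∈ orthant α ↔ ∀ x ∈ orthant α, 0 ≤ ⟪x, y⟫ := by
  refine ⟨fun hy x hx => ?_, fun h i => ?_⟩
  · rw [PiLp.inner_apply]
    refine Finset.sum_nonneg fun i _ => ?_
    cases hα : α i
    · simpa using mul_nonneg_of_nonpos_of_nonpos ((hy i).2 hα) ((hx i).2 hα)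
    · simpa using mul_nonneg ((hy i).1 hα) ((hx i).1 hα)
  · have := h (EuclideanSpace.single i (if α i then 1 else -1)) fun j => by
      rcases eq_or_ne j i with rfl | hj <;> cases α j <;> simp_all
    cases hα : α i <;> simp_all [EuclideanSpace.inner_single_left]

end Orthant

section Chamber

variable {n : ℕ} {V : Submodule ℝ (EuclideanSpace ℝ (Fin n))} {t : EuclideanSpace ℝ (Fin n)}
  {α : Fin n → Bool}

lemma mem_chamber_iff {x : EuclideanSpace ℝ (Fin n)} :
    x ∈ chamber V t α ↔ x - t ∈ V ∧ x ∈ orthant α := by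
  refine and_congr_left fun _ => ⟨?_, fun h => ⟨x - t, h, add_sub_cancel t x⟩⟩
  rintro ⟨v, hv, rfl⟩
  simpa using hv

lemma add_smul_mem_chamber {y w : EuclideanSpace ℝ (Fin n)} {s : ℝ} (hy : y ∈ chamber V t α)
    (hw : w ∈ V) (hwα : w ∈ orthant α) (hs : 0 ≤ s) : y + s • w ∈ chamber V t α := by
  rw [mem_chamber_iff] at hy ⊢
  refine ⟨by simpa [add_sub_right_comm] using V.add_mem hy.1 (V.smul_mem s hw), fun i => ?_⟩
  have hyi := hy.2 i
  have hwi := hwα i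
  simp only [PiLp.add_apply, PiLp.smul_apply, smul_eq_mul]
  exact ⟨fun h => add_nonneg (hyi.1 h) (mul_nonneg hs (hwi.1 h)),
    fun h => add_nonpos (hyi.2 h) (mul_nonpos_of_nonneg_of_nonpos hs (hwi.2 h))⟩

theorem exists_mem_orthogonal_orthant_inner_neg (h : chamber V t α = ∅) :
    ∃ w ∈ Vᗮ, w ∈ orthant α ∧ ⟪t, w⟫ < 0 := by
  set P := Vᗮ.starProjection
  let C : ProperCone ℝ (EuclideanSpace ℝ (Fin n)) :=
    { toSubmodule := (PointedCone.positive ℝ (Fin n → ℝ)).map (P.toLinearMap ∘ₗ signFlip α)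
      isClosed' := LinearMap.isClosed_image_nonneg (P.toLinearMap ∘ₗ signFlip α) }
  have hC : (C : Set (EuclideanSpace ℝ (Fin n))) = P '' orthant α := by
    rw [orthant_eq_image_signFlip, Set.image_image]; rfl
  have htC : P t ∉ C := by
    rw [← SetLike.mem_coe, hC]
    rintro ⟨x, hx, hPx⟩
    refine h.subset (mem_chamber_iff.mpr ⟨?_, hx⟩)
    rw [← V.orthogonal_orthogonal, ← Submodule.starProjection_apply_eq_zero_iff, map_sub, hPx,
      sub_self]
  obtain ⟨y, hyC, hty⟩ := C.hyperplane_separation' htC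
  refine ⟨P y, Vᗮ.starProjection_apply_mem y, mem_orthant_iff_forall_inner_nonneg.mpr
    fun x hx => ?_, ?_⟩
  · rw [← Submodule.inner_starProjection_left_eq_right]
    exact hyC _ (by rw [← SetLike.mem_coe, hC]; exact Set.mem_image_of_mem P hx)
  · rwa [← Submodule.inner_starProjection_left_eq_right]

end Chamber

lemma not_bddBelow_inner_image_of_ray {n : ℕ} {S : Set (EuclideanSpace ℝ (Fin n))}
    {t y w : EuclideanSpace ℝ (Fin n)} (hray : ∀ s : ℝ, 0 ≤ s → y + s • w ∈ S) (hw : ⟪t, w⟫ < 0) :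
    ¬ BddBelow ((fun z => ⟪t, z⟫) '' S) := by
  rintro ⟨B, hB⟩
  obtain ⟨N, hN⟩ := exists_nat_gt ((⟪t, y⟫ - B) / -⟪t, w⟫)
  have hyN := hB ⟨_, hray N N.cast_nonneg, rfl⟩
  rw [div_lt_iff₀ (neg_pos.mpr hw)] at hN
  simp only [inner_add_right, real_inner_smul_right] at hyN
  linarith

/-- Two-parameter Gale duality: if the Gale dual chamber `(m + V^⊥) ∩ O_α` is nonempty,
then the primal chamber `(t + V) ∩ O_α` is nonempty iff `y ↦ ⟨t, y⟩` is bounded below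
on the Gale dual chamber. -/
theorem two_parameter_gale_duality {n : ℕ}
    (V : Submodule ℝ (EuclideanSpace ℝ (Fin n)))
    (t m : EuclideanSpace ℝ (Fin n)) (α : Fin n → Bool)
    (hdual : (chamber Vᗮ m α).Nonempty) :
    (chamber V t α).Nonempty ↔
      BddBelow ((fun y => ⟪t, y⟫) '' chamber Vᗮ m α) := by
  constructor
  · rintro ⟨x, hx⟩
    rw [mem_chamber_iff] at hx
    refine ⟨-⟪x - t, m⟫, ?_⟩
    rintro _ ⟨y, hy, rfl⟩
    rw [mem_chamber_iff] at hy
    have hxy : 0 ≤ ⟪x, y⟫ := mem_orthant_iff_forall_inner_nonneg.mp hy.2 x hx.2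
    have hperp : ⟪x - t, y - m⟫ = 0 := Submodule.inner_right_of_mem_orthogonal hx.1 hy.1
    simp only [inner_sub_left, inner_sub_right] at hperp ⊢
    linarith
  · intro hbdd
    by_contra hempty
    obtain ⟨w, hw, hwα, htw⟩ :=
      exists_mem_orthogonal_orthant_inner_neg (Set.not_nonempty_iff_eq_empty.mp hempty)
    obtain ⟨y, hy⟩ := hdual
    exact not_bddBelow_inner_image_of_ray (fun s hs => add_smul_mem_chamber hy hw hwα hs) htw hbdd
end

section
/- Existence criterion for limits of points of ℂᴺ under a diagonal ℂ×-action with integer weights: Let w : Fin N → ℤ and x : Fin N → ℂ. There exists L : Fin N → ℂ such that the function sending a nonzero complex number λ to the point (λ^{w i} · x i)_{i} of ℂᴺ tends to L as ‖λ‖ → ∞ (that is, along the filter on nonzero complex numbers obtained by pulling back the atTop filter under the norm) if and only if x i = 0 for every index i with w i > 0. Moreover, when this holds, the limit L is given by L i = x i if w i = 0 and L i = 0 if w i ≠ 0. -/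
/-! Coordinatewise, `‖λ ^ n * c‖ = ‖λ‖ ^ n * ‖c‖` tends to `0` for `n < 0`, is constant for
`n = 0`, and tends to `∞` for `n > 0` unless `c = 0`; limits in `ℂᴺ` are coordinatewise. -/

open Filter Topology

noncomputable def unitsAtInfty : Filter ℂˣ :=
  Filter.comap (fun z : ℂˣ => ‖(z : ℂ)‖) Filter.atTop

instance unitsAtInfty_neBot : unitsAtInfty.NeBot := by
  refine comap_neBot fun s hs => ?_
  obtain ⟨r, hr⟩ := mem_atTop_sets.mp hs
  obtain ⟨z, hz⟩ := NormedField.exists_lt_norm ℂ (max r 0)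
  have hz₀ : z ≠ 0 := norm_pos_iff.mp ((le_max_right r 0).trans_lt hz)
  exact ⟨Units.mk0 z hz₀, hr _ ((le_max_left r 0).trans hz.le)⟩

section NormTendstoAtTop

variable {α 𝕜 : Type*} [NormedField 𝕜] {l : Filter α} {f : α → 𝕜}

theorem tendsto_zpow_nhds_zero_of_norm_tendsto_atTop (hf : Tendsto (‖f ·‖) l atTop) {n : ℤ}
    (hn : n < 0) : Tendsto (fun a => f a ^ n) l (𝓝 0) := by
  rw [tendsto_zero_iff_norm_tendsto_zero]
  simpa only [norm_zpow, Function.comp_def] using (tendsto_zpow_atTop_zero hn).comp hf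

theorem tendsto_norm_zpow_mul_atTop (hf : Tendsto (‖f ·‖) l atTop) {n : ℤ} (hn : 0 < n)
    {c : 𝕜} (hc : c ≠ 0) : Tendsto (fun a => ‖f a ^ n * c‖) l atTop := by
  simpa only [norm_mul, norm_zpow, Function.comp_def] using
    ((tendsto_zpow_atTop_atTop hn).comp hf).atTop_mul_const (norm_pos_iff.mpr hc)

theorem tendsto_zpow_mul_ite (hf : Tendsto (‖f ·‖) l atTop) {n : ℤ} {c : 𝕜}
    (hc : 0 < n → c = 0) : Tendsto (fun a => f a ^ n * c) l (𝓝 (if n = 0 then c else 0)) := by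
  rcases lt_trichotomy n 0 with hn | rfl | hn
  · simpa [hn.ne] using (tendsto_zpow_nhds_zero_of_norm_tendsto_atTop hf hn).mul_const c
  · simpa using tendsto_const_nhds
  · simpa [hn.ne', hc hn] using tendsto_const_nhds

theorem tendsto_zpow_mul_nhds_iff [l.NeBot] (hf : Tendsto (‖f ·‖) l atTop) {n : ℤ} {c y : 𝕜} :
    Tendsto (fun a => f a ^ n * c) l (𝓝 y) ↔ (0 < n → c = 0) ∧ y = if n = 0 then c else 0 := by
  refine ⟨fun h => ?_, fun ⟨hc, hy⟩ => hy ▸ tendsto_zpow_mul_ite hf hc⟩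
  have hc : 0 < n → c = 0 := fun hn => by
    by_contra hc
    exact not_tendsto_nhds_of_tendsto_atTop (tendsto_norm_zpow_mul_atTop hf hn hc) _ h.norm
  exact ⟨hc, tendsto_nhds_unique h (tendsto_zpow_mul_ite hf hc)⟩

end NormTendstoAtTop

/-- Existence criterion for limits of points of `ℂᴺ` under a diagonal `ℂˣ`-action with
integer weights: the limit of `(λ^{w i} * x i)_i` as `‖λ‖ → ∞` exists iff `x i = 0`
for every `i` with `w i > 0`; and the limit is `x i` at indices with `w i = 0` and `0`
at indices with `w i ≠ 0`. -/
theorem limit_exists_iff_weights {N : ℕ} (w : Fin N → ℤ) (x : Fin N → ℂ) :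
    ((∃ L : Fin N → ℂ,
        Tendsto (fun z : ℂˣ => fun i => (z : ℂ) ^ (w i) * x i) unitsAtInfty (nhds L)) ↔
      ∀ i, 0 < w i → x i = 0) ∧
    (∀ L : Fin N → ℂ,
      Tendsto (fun z : ℂˣ => fun i => (z : ℂ) ^ (w i) * x i) unitsAtInfty (nhds L) →
      ∀ i, L i = if w i = 0 then x i else 0) := by
  have hnorm : Tendsto (fun z : ℂˣ => ‖(z : ℂ)‖) unitsAtInfty atTop := tendsto_comap
  have hcoord (L : Fin N → ℂ) :
      Tendsto (fun z : ℂˣ => fun i => (z : ℂ) ^ (w i) * x i) unitsAtInfty (𝓝 L) ↔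
        ∀ i, (0 < w i → x i = 0) ∧ L i = if w i = 0 then x i else 0 := by
    rw [tendsto_pi_nhds]
    exact forall_congr' fun i => tendsto_zpow_mul_nhds_iff hnorm
  simp only [hcoord]
  exact ⟨⟨fun ⟨_, hL⟩ i => (hL i).1, fun hx => ⟨_, fun i => ⟨hx i, rfl⟩⟩⟩,
    fun _ hL i => (hL i).2⟩
end
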